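/- Let X be a measurable space, x_0 ∈ X, and ρ : X × X → ℝ a measurable symmetric function. Let X, X', Y, Y' be independent X-valued random variables with X' distributed as X and Y' distributed as Y, and assume ρ(X,Y), ρ(X,X'), ρ(Y,Y'), ρ(X,x_0) and ρ(Y,x_0) are all integrable. Define k(x,y) = (1/2)( ρ(x,x_0) + ρ(y,x_0) − ρ(x,y) ). Then 2 E[ρ(X,Y)] − E[ρ(X,X')] − E[ρ(Y,Y')] = 2 ( E[k(X,X')] + E[k(Y,Y')] − 2 E[k(X,Y)] ). -/

import Mathlib

/-! Expanding `k`, each `E[k(U,V)]` equals `(E[ρ(U,x₀)] + E[ρ(V,x₀)] − E[ρ(U,V)]) / 2`; since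
`X' ~ X` and `Y' ~ Y`, the centring terms at `x₀` cancel and only the energy distance remains. -/

open MeasureTheory ProbabilityTheory

theorem integral_const_mul_add_sub {Ω : Type*} [MeasurableSpace Ω] {μ : Measure Ω}
    {f g h : Ω → ℝ} (hf : Integrable f μ) (hg : Integrable g μ) (hh : Integrable h μ) (c : ℝ) :
    ∫ ω, c * (f ω + g ω - h ω) ∂μ = c * ((∫ ω, f ω ∂μ) + (∫ ω, g ω ∂μ) - ∫ ω, h ω ∂μ) := by
  rw [integral_const_mul, integral_sub (f := fun ω => f ω + g ω) (hf.add hg) hh,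
    integral_add hf hg]

theorem energy_distance_eq_kernel_general {𝒳 : Type*} [MeasurableSpace 𝒳]
    {Ω : Type*} [MeasurableSpace Ω] (μ : Measure Ω)
    (x₀ : 𝒳) (ρ : 𝒳 → 𝒳 → ℝ)
    (hρmeas : Measurable fun p : 𝒳 × 𝒳 => ρ p.1 p.2)
    (X X' Y Y' : Ω → 𝒳)
    (hXX' : IdentDistrib X' X μ μ) (hYY' : IdentDistrib Y' Y μ μ)
    (hiXY : Integrable (fun ω => ρ (X ω) (Y ω)) μ)
    (hiXX' : Integrable (fun ω => ρ (X ω) (X' ω)) μ)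
    (hiYY' : Integrable (fun ω => ρ (Y ω) (Y' ω)) μ)
    (hiX0 : Integrable (fun ω => ρ (X ω) x₀) μ)
    (hiY0 : Integrable (fun ω => ρ (Y ω) x₀) μ)
    (k : 𝒳 → 𝒳 → ℝ) (hk : ∀ x y, k x y = (1 / 2) * (ρ x x₀ + ρ y x₀ - ρ x y)) :
    2 * ∫ ω, ρ (X ω) (Y ω) ∂μ - ∫ ω, ρ (X ω) (X' ω) ∂μ - ∫ ω, ρ (Y ω) (Y' ω) ∂μ =
      2 * ((∫ ω, k (X ω) (X' ω) ∂μ) + (∫ ω, k (Y ω) (Y' ω) ∂μ) -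
        2 * ∫ ω, k (X ω) (Y ω) ∂μ) := by
  have hρ₀ : Measurable fun x => ρ x x₀ := hρmeas.of_uncurry_right
  have hX₀ : IdentDistrib (fun ω => ρ (X' ω) x₀) (fun ω => ρ (X ω) x₀) μ μ := hXX'.comp hρ₀
  have hY₀ : IdentDistrib (fun ω => ρ (Y' ω) x₀) (fun ω => ρ (Y ω) x₀) μ μ := hYY'.comp hρ₀
  simp only [hk]
  rw [integral_const_mul_add_sub hiX0 (hX₀.integrable_iff.mpr hiX0) hiXX',
    integral_const_mul_add_sub hiY0 (hY₀.integrable_iff.mpr hiY0) hiYY',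
    integral_const_mul_add_sub hiX0 hiY0 hiXY, hX₀.integral_eq, hY₀.integral_eq]
  ring

/-- The energy distance of Matteson–James expressed through the induced kernel
`k(x,y) = (1/2)(ρ(x,x₀) + ρ(y,x₀) − ρ(x,y))`: for independent `X, X', Y, Y'` with
`X' ~ X` and `Y' ~ Y` and the required integrability,
`2 E[ρ(X,Y)] − E[ρ(X,X')] − E[ρ(Y,Y')] = 2 ( E[k(X,X')] + E[k(Y,Y')] − 2 E[k(X,Y)] )`. -/
theorem energy_distance_eq_kernel {𝒳 : Type*} [MeasurableSpace 𝒳]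
    {Ω : Type*} [MeasurableSpace Ω] (μ : Measure Ω) [IsProbabilityMeasure μ]
    (x₀ : 𝒳) (ρ : 𝒳 → 𝒳 → ℝ)
    (hρmeas : Measurable fun p : 𝒳 × 𝒳 => ρ p.1 p.2)
    (hρsym : ∀ x y, ρ x y = ρ y x)
    (X X' Y Y' : Ω → 𝒳)
    (hX : Measurable X) (hX' : Measurable X') (hY : Measurable Y) (hY' : Measurable Y')
    (hindep : iIndepFun (β := fun _ : Fin 4 => 𝒳)
      ![X, X', Y, Y'] μ)
    (hXX' : IdentDistrib X' X μ μ) (hYY' : IdentDistrib Y' Y μ μ)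
    (hiXY : Integrable (fun ω => ρ (X ω) (Y ω)) μ)
    (hiXX' : Integrable (fun ω => ρ (X ω) (X' ω)) μ)
    (hiYY' : Integrable (fun ω => ρ (Y ω) (Y' ω)) μ)
    (hiX0 : Integrable (fun ω => ρ (X ω) x₀) μ)
    (hiY0 : Integrable (fun ω => ρ (Y ω) x₀) μ)
    (k : 𝒳 → 𝒳 → ℝ) (hk : ∀ x y, k x y = (1 / 2) * (ρ x x₀ + ρ y x₀ - ρ x y)) :
    2 * ∫ ω, ρ (X ω) (Y ω) ∂μ - ∫ ω, ρ (X ω) (X' ω) ∂μ - ∫ ω, ρ (Y ω) (Y' ω) ∂μ =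
      2 * ((∫ ω, k (X ω) (X' ω) ∂μ) + (∫ ω, k (Y ω) (Y' ω) ∂μ) -
        2 * ∫ ω, k (X ω) (Y ω) ∂μ) :=
  energy_distance_eq_kernel_general μ x₀ ρ hρmeas X X' Y Y' hXX' hYY' hiXY hiXX' hiYY' hiX0 hiY0 k
    hk
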